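/- Density of Floquet multipliers in the unit circle (justification of Remark 3.5 / equation (3.y)): Let T_per > 0 and let A = (A₁, A₂) : ℝ → ℝ² be continuously differentiable and T_per-periodic with ∫₀^{T_per} A₁(T) dT = ∫₀^{T_per} A₂(T) dT = 0. Then for every z ∈ ℂ with |z| = 1 and every δ > 0, there exist a real number ξ, a fundamental solution U_ξ of i U′(T) = [ξ σ₁ + A₁(T) σ₁ − A₂(T) σ₂] U(T), and an eigenvalue w of the monodromy matrix U_ξ(T_per), such that |w − z| < δ. In other words, the Floquet multipliers of the family of forced Dirac systems, taken over all momenta ξ ∈ ℝ, are dense in the unit circle S¹. -/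

import Mathlib

/-!
Put `θ(T) = ξ T + ∫₀ᵀ A₁` and `R(x) = exp (-i x σ₁)`. The substitution `U = R(θ) V` turns the
equation into `V' = B V` with `B = i A₂ (cos 2θ σ₂ - sin 2θ σ₃)`. Since `θ' = ξ + A₁ ≥ ξ / 2` for
large `ξ`, integrating by parts gives `∫₀ᵗ B = O(1/ξ)`, and Gronwall's inequality then gives
`V(T_per) = 1 + O(1/ξ)`. As `A₁` has mean zero, `θ(T_per) = ξ T_per`, so the monodromy matrix is
`R(ξ T_per) + O(1/ξ)`: it has determinant `1` (the generator is traceless) and trace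
`2 cos (ξ T_per) + O(1/ξ)`. Choose `ξ` large with `cos (ξ T_per) = Re z`. The eigenvalues `w₁, w₂`
are the roots of `w² - tr w + 1`, and `|z| = 1` gives `|z - w₁| |z - w₂| = |tr - 2 Re z|`, so one
of them is `O(ξ^{-1/2})`-close to `z`.
-/

open Matrix Complex intervalIntegral

noncomputable section

/-- The Pauli matrix `σ₁ = [[0,1],[1,0]]`. -/
def pauli1 : Matrix (Fin 2) (Fin 2) ℂ := !![0, 1; 1, 0]

/-- The Pauli matrix `σ₂ = [[0,−i],[i,0]]`. -/
def pauli2 : Matrix (Fin 2) (Fin 2) ℂ := !![0, -Complex.I; Complex.I, 0]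

/-- The forced Dirac generator `D(T) = ξ σ₁ + A₁(T) σ₁ − A₂(T) σ₂`. -/
def Dwkb (A : ℝ → ℝ × ℝ) (ξ : ℝ) (T : ℝ) : Matrix (Fin 2) (Fin 2) ℂ :=
  (ξ : ℂ) • pauli1 + ((A T).1 : ℂ) • pauli1 - ((A T).2 : ℂ) • pauli2

/-- `U : ℝ → M₂(ℂ)` is a fundamental solution of `i U′(T) = D(T) U(T)`:
`U(0) = I` and (entrywise) `U′(T) = −i D(T) U(T)` for every `T`. -/
def IsFundamentalSolution (D U : ℝ → Matrix (Fin 2) (Fin 2) ℂ) : Prop :=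
  U 0 = 1 ∧
  ∀ T : ℝ, ∀ i j : Fin 2,
    HasDerivAt (fun t : ℝ => U t i j) (((-Complex.I) • (D T * U T)) i j) T

open Set

lemma abs_integral_abs_pow (T : ℝ) (n : ℕ) :
    |∫ s in (0 : ℝ)..T, |s| ^ n| = |T| ^ (n + 1) / (n + 1) := by
  wlog hT : 0 ≤ T generalizing T
  · have h := this (-T) (by linarith)
    rw [abs_neg, ← neg_zero, ← integral_comp_neg, integral_symm, abs_neg] at h
    simpa using h
  rw [abs_of_nonneg hT, integral_congr (g := fun s => s ^ n), integral_pow]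
  · simp only [ne_eq, Nat.add_one_ne_zero, not_false_eq_true, zero_pow, sub_zero]
    exact abs_of_nonneg (by positivity)
  · intro s hs
    rw [uIcc_of_le hT] at hs
    simp [abs_of_nonneg hs.1]

lemma gronwallBound_zero_mul (c ε x : ℝ) :
    gronwallBound 0 c (c * ε) x = ε * (Real.exp (c * x) - 1) := by
  rcases eq_or_ne c 0 with rfl | hc
  · simp [gronwallBound_K0]
  · rw [gronwallBound_of_K_ne_0 hc]
    field_simp
    ring

section LinearODE

variable {R : Type*} [NormedRing R] [NormedAlgebra ℝ R]

def dysonTerm (B : ℝ → R) : ℕ → ℝ → R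
  | 0 => fun _ => 1
  | n + 1 => fun T => ∫ s in (0 : ℝ)..T, B s * dysonTerm B n s

variable {B : ℝ → R}

lemma continuous_dysonTerm (hB : Continuous B) (n : ℕ) : Continuous (dysonTerm B n) := by
  induction n with
  | zero => exact continuous_const
  | succ n ih => exact continuous_primitive (fun a b => (hB.mul ih).intervalIntegrable a b) 0

lemma hasDerivAt_dysonTerm_succ [CompleteSpace R] (hB : Continuous B) (n : ℕ) (T : ℝ) :
    HasDerivAt (dysonTerm B (n + 1)) (B T * dysonTerm B n T) T :=
  integral_hasDerivAt_right ((hB.mul (continuous_dysonTerm hB n)).intervalIntegrable _ _)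
    ((hB.mul (continuous_dysonTerm hB n)).stronglyMeasurableAtFilter _ _)
    (hB.mul (continuous_dysonTerm hB n)).continuousAt

lemma norm_dysonTerm_le [NormOneClass R] {c T : ℝ} (hc : ∀ s ∈ uIcc 0 T, ‖B s‖ ≤ c)
    (n : ℕ) : ‖dysonTerm B n T‖ ≤ (c * |T|) ^ n / n.factorial := by
  induction n generalizing T with
  | zero => simp [dysonTerm]
  | succ n ih =>
    have hc0 : 0 ≤ c := (norm_nonneg _).trans (hc 0 left_mem_uIcc)
    calc ‖dysonTerm B (n + 1) T‖
        ≤ |∫ s in (0 : ℝ)..T, c ^ (n + 1) / n.factorial * |s| ^ n| := by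
          refine norm_integral_le_abs_of_norm_le
            (MeasureTheory.ae_restrict_of_forall_mem measurableSet_uIoc fun s hs => ?_)
            (Continuous.intervalIntegrable (by fun_prop) _ _)
          have hsT : uIcc 0 s ⊆ uIcc 0 T := uIcc_subset_uIcc_left (uIoc_subset_uIcc hs)
          calc ‖B s * dysonTerm B n s‖ ≤ c * ((c * |s|) ^ n / n.factorial) :=
                norm_mul_le_of_le (hc s (hsT right_mem_uIcc)) (ih fun r hr => hc r (hsT hr))
            _ = c ^ (n + 1) / n.factorial * |s| ^ n := by ring
      _ = (c * |T|) ^ (n + 1) / (n + 1).factorial := by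
          rw [integral_const_mul, abs_mul, abs_integral_abs_pow, Nat.factorial_succ,
            abs_of_nonneg (by positivity)]
          push_cast
          field_simp
          ring

section

variable [NormOneClass R] [CompleteSpace R]

lemma summable_dysonTerm (hB : Continuous B) (T : ℝ) : Summable fun n => dysonTerm B n T := by
  obtain ⟨c, hc⟩ := isCompact_uIcc.exists_bound_of_continuousOn (hB.continuousOn (s := uIcc 0 T))
  exact .of_norm_bounded (Real.summable_pow_div_factorial (c * |T|)) (norm_dysonTerm_le hc)

theorem exists_hasDerivAt_eq_mul (hB : Continuous B) :
    ∃ V : ℝ → R, V 0 = 1 ∧ ∀ t, HasDerivAt V (B t * V t) t := by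
  set V : ℝ → R := fun t => ∑' n, dysonTerm B n t
  have hV : ∀ t, V t = 1 + ∑' n, dysonTerm B (n + 1) t := fun t =>
    (summable_dysonTerm hB t).tsum_eq_zero_add
  refine ⟨V, by simp [hV, dysonTerm], fun t => ?_⟩
  set r := |t| + 1
  have hr : 0 < r := by positivity
  obtain ⟨c, hc⟩ := isCompact_Icc.exists_bound_of_continuousOn (hB.continuousOn (s := Icc (-r) r))
  have hsub : ∀ y ∈ Ioo (-r) r, uIcc 0 y ⊆ Icc (-r) r := fun y hy =>
    uIcc_subset_Icc ⟨by linarith [abs_nonneg t], by linarith [abs_nonneg t]⟩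
      (Ioo_subset_Icc_self hy)
  have hderiv := hasDerivAt_tsum_of_isPreconnected
    (g := fun n => dysonTerm B (n + 1)) (g' := fun n y => B y * dysonTerm B n y)
    ((Real.summable_pow_div_factorial (c * r)).mul_left c) isOpen_Ioo isPreconnected_Ioo
    (fun n y _ => hasDerivAt_dysonTerm_succ hB n y) (fun n y hy => ?_)
    (y₀ := 0) ⟨by linarith, hr⟩ (by simp [dysonTerm])
    (show t ∈ Ioo (-r) r from ⟨by linarith [neg_abs_le t], by linarith [le_abs_self t]⟩)
  · rw [(summable_dysonTerm hB t).tsum_mul_left] at hderiv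
    simpa only [← hV] using hderiv.const_add 1
  · have hy' : |y| ≤ r := abs_le.2 ⟨hy.1.le, hy.2.le⟩
    refine norm_mul_le_of_le (hc y (hsub y hy right_mem_uIcc)) ((norm_dysonTerm_le
      fun s hs => hc s (hsub y hy hs)) n |>.trans ?_)
    have hc0 : 0 ≤ c := (norm_nonneg _).trans (hc 0 ⟨by linarith, hr.le⟩)
    gcongr

end

/-- Gronwall's inequality for `V - 1 - ∫₀ᵗ B`, whose derivative is `B (V - 1 - ∫₀ᵗ B) + B ∫₀ᵗ B`. -/
theorem norm_sub_one_le_of_hasDerivAt [CompleteSpace R] {V : ℝ → R} {c ε T : ℝ} (hB : Continuous B)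
    (hV0 : V 0 = 1) (hV : ∀ t, HasDerivAt V (B t * V t) t) (hT : 0 ≤ T)
    (hc : ∀ t ∈ Icc 0 T, ‖B t‖ ≤ c) (hε : ∀ t ∈ Icc 0 T, ‖∫ s in (0 : ℝ)..t, B s‖ ≤ ε) :
    ‖V T - 1‖ ≤ ε * Real.exp (c * T) := by
  set η : ℝ → R := fun t => ∫ s in (0 : ℝ)..t, B s
  set f : ℝ → R := fun t => V t - 1 - η t
  have hf : ∀ t, HasDerivAt f (B t * (f t + η t)) t := fun t =>
    (((hV t).sub_const 1).fun_sub (integral_hasDerivAt_right (hB.intervalIntegrable 0 _)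
      (hB.stronglyMeasurableAtFilter _ _) hB.continuousAt)).congr_deriv
      (by simp [f, mul_sub])
  have hfT := norm_le_gronwallBound_of_norm_deriv_right_le (δ := 0) (K := c) (ε := c * ε)
    (fun t _ => (hf t).continuousAt.continuousWithinAt) (fun t _ => (hf t).hasDerivWithinAt)
    (by simp [f, η, hV0]) (fun t ht => ?_) T ⟨hT, le_rfl⟩
  · rw [sub_zero, gronwallBound_zero_mul] at hfT
    calc ‖V T - 1‖ = ‖f T + η T‖ := by simp [f]
      _ ≤ ε * (Real.exp (c * T) - 1) + ε := norm_add_le_of_le hfT (hε T ⟨hT, le_rfl⟩)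
      _ = ε * Real.exp (c * T) := by ring
  · have hc0 : 0 ≤ c := (norm_nonneg _).trans (hc t (Ico_subset_Icc_self ht))
    calc ‖B t * (f t + η t)‖ ≤ c * (‖f t‖ + ε) :=
          norm_mul_le_of_le (hc t (Ico_subset_Icc_self ht))
            (norm_add_le_of_le le_rfl (hε t (Ico_subset_Icc_self ht)))
      _ = c * ‖f t‖ + c * ε := by ring

end LinearODE

/-- Integration by parts against a bounded primitive `G` of `g`. -/
lemma abs_integral_mul_le_of_hasDerivAt {u u' G g : ℝ → ℝ} {T M L : ℝ} (hT : 0 ≤ T)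
    (hu : ∀ s ∈ Icc 0 T, HasDerivAt u (u' s) s) (hu' : ContinuousOn u' (Icc 0 T))
    (hG : ∀ s ∈ Icc 0 T, HasDerivAt G (g s) s) (hg : ContinuousOn g (Icc 0 T))
    (hGb : ∀ s ∈ Icc 0 T, |G s| ≤ 1) (huM : ∀ s ∈ Icc 0 T, |u s| ≤ M)
    (hu'L : ∀ s ∈ Icc 0 T, |u' s| ≤ L) :
    |∫ s in (0 : ℝ)..T, u s * g s| ≤ 2 * M + L * T := by
  rw [← uIcc_of_le hT] at hu hu' hG hg hGb huM hu'L
  have hmul : ∀ {v : ℝ → ℝ} {C : ℝ}, (∀ s ∈ uIcc 0 T, |v s| ≤ C) →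
      ∀ s ∈ uIcc 0 T, |v s * G s| ≤ C := fun hv s hs =>
    (abs_mul _ _).trans_le ((mul_le_of_le_one_right (abs_nonneg _) (hGb s hs)).trans (hv s hs))
  have hrest : |∫ s in (0 : ℝ)..T, u' s * G s| ≤ L * T := by
    simpa [abs_of_nonneg hT] using norm_integral_le_of_norm_le_const fun s hs =>
      (Real.norm_eq_abs _).trans_le (hmul hu'L s (uIoc_subset_uIcc hs))
  rw [integral_mul_deriv_eq_deriv_mul hu hG (hu'.intervalIntegrable) (hg.intervalIntegrable)]
  calc |u T * G T - u 0 * G 0 - ∫ s in (0 : ℝ)..T, u' s * G s|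
      ≤ |u T * G T| + |u 0 * G 0| + |∫ s in (0 : ℝ)..T, u' s * G s| :=
        (abs_sub _ _).trans (add_le_add_left (abs_sub _ _) _)
    _ ≤ M + M + L * T := by
        gcongr
        exacts [hmul huM T right_mem_uIcc, hmul huM 0 left_mem_uIcc]
    _ = 2 * M + L * T := by ring

lemma abs_quotient_rule_le {a a' p p' K ξ : ℝ} (ha : |a| ≤ K) (ha' : |a'| ≤ K) (hp' : |p'| ≤ 2 * K)
    (hξ : 2 * K ≤ ξ) (hξ0 : 0 < ξ) (hp : ξ ≤ p) :
    |(a' * p - a * p') / p ^ 2| ≤ 2 * K / ξ := by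
  have hp0 : 0 < p := hξ0.trans_le hp
  have hK : 0 ≤ K := (abs_nonneg _).trans ha
  rw [abs_div, abs_of_pos (pow_pos hp0 2), div_le_div_iff₀ (by positivity) hξ0]
  have hnum : |a' * p - a * p'| ≤ K * p + K * (2 * K) := by
    refine (abs_sub _ _).trans (add_le_add ?_ ?_) <;> rw [abs_mul]
    · rw [abs_of_pos hp0]; gcongr
    · gcongr
  have hξp : 2 * K * ξ ≤ p * p :=
    (mul_le_mul_of_nonneg_right hξ hξ0.le).trans (mul_self_le_mul_self hξ0.le hp)
  calc |a' * p - a * p'| * ξ ≤ (K * p + K * (2 * K)) * ξ := by gcongr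
    _ = K * p * ξ + K * (2 * K * ξ) := by ring
    _ ≤ K * p * p + K * (p * p) := by gcongr
    _ = 2 * K * p ^ 2 := by ring

lemma abs_integral_snd_mul_le {A : ℝ → ℝ × ℝ} (hA : ContDiff ℝ 1 A) {ξ K T : ℝ} (hT : 0 ≤ T)
    (hK : ∀ s ∈ Icc 0 T, ‖A s‖ ≤ K ∧ ‖deriv A s‖ ≤ K) (hξ : 2 * K + 1 ≤ ξ) {G g : ℝ → ℝ}
    (hG : ∀ s, HasDerivAt G (2 * (ξ + (A s).1) * g s) s) (hg : Continuous g)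
    (hGb : ∀ s, |G s| ≤ 1) :
    |∫ s in (0 : ℝ)..T, (A s).2 * g s| ≤ 2 * K * (1 + T) / ξ := by
  -- `p = 2 θ' ≥ ξ` and `A₂ g = (A₂ / p) (p g)`, where `p g = G'`: integrate by parts.
  have hbd : ∀ s ∈ Icc 0 T, |(A s).1| ≤ K ∧ |(A s).2| ≤ K ∧
      |(deriv A s).1| ≤ K ∧ |(deriv A s).2| ≤ K := fun s hs =>
    ⟨(norm_fst_le _).trans (hK s hs).1, (norm_snd_le _).trans (hK s hs).1,
      (norm_fst_le _).trans (hK s hs).2, (norm_snd_le _).trans (hK s hs).2⟩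
  have hξ0 : 0 < ξ := by linarith [(norm_nonneg _).trans (hK 0 ⟨le_rfl, hT⟩).1]
  set p : ℝ → ℝ := fun s => 2 * (ξ + (A s).1)
  have hp : ∀ s ∈ Icc 0 T, ξ ≤ p s := fun s hs => by
    linarith [neg_abs_le (A s).1, (hbd s hs).1]
  have hA' : ∀ s, HasDerivAt A (deriv A s) s := fun s =>
    (hA.differentiable one_ne_zero s).hasDerivAt
  have hA₁ : ∀ s, HasDerivAt (fun t => (A t).1) (deriv A s).1 s := fun s =>
    hasFDerivAt_fst.comp_hasDerivAt (f := A) s (hA' s)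
  have hA₂ : ∀ s, HasDerivAt (fun t => (A t).2) (deriv A s).2 s := fun s =>
    hasFDerivAt_snd.comp_hasDerivAt (f := A) s (hA' s)
  have hcont : Continuous A := hA.continuous
  have hcont' : Continuous (deriv A) := hA.continuous_deriv le_rfl
  have key := abs_integral_mul_le_of_hasDerivAt hT
    (fun s hs => (hA₂ s).fun_div (((hA₁ s).const_add ξ).const_mul 2) (hξ0.trans_le (hp s hs)).ne')
    ?_ (fun s _ => hG s) (by fun_prop) (fun s _ => hGb s) (M := K / ξ) (L := 2 * K / ξ) ?_ ?_
  · calc |∫ s in (0 : ℝ)..T, (A s).2 * g s|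
        = |∫ s in (0 : ℝ)..T, (A s).2 / p s * (p s * g s)| := by
          rw [integral_congr fun s hs => ?_]
          rw [uIcc_of_le hT] at hs
          field_simp [(hξ0.trans_le (hp s hs)).ne']
      _ ≤ 2 * (K / ξ) + 2 * K / ξ * T := key
      _ = 2 * K * (1 + T) / ξ := by ring
  · exact ContinuousOn.div (by fun_prop) (by fun_prop) fun s hs =>
      pow_ne_zero 2 (hξ0.trans_le (hp s hs)).ne'
  · intro s hs
    rw [abs_div, abs_of_pos (hξ0.trans_le (hp s hs))]
    exact div_le_div₀ ((abs_nonneg _).trans (hbd s hs).2.1) (hbd s hs).2.1 hξ0 (hp s hs)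
  · intro s hs
    obtain ⟨-, h₂, h₁', h₂'⟩ := hbd s hs
    exact abs_quotient_rule_le h₂ h₂' (by rw [abs_mul, abs_two]; linarith) (by linarith) hξ0
      (hp s hs)

local notation "M₂" => Matrix (Fin 2) (Fin 2) ℂ

attribute [local instance] Matrix.linftyOpNormedAddCommGroup Matrix.linftyOpNormedRing
  Matrix.linftyOpNormedAlgebra

lemma linfty_opNorm_fin_two (X : M₂) :
    ‖X‖ = max (‖X 0 0‖ + ‖X 0 1‖) (‖X 1 0‖ + ‖X 1 1‖) := by
  simp [linfty_opNorm_def, Finset.univ_fin2]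

lemma norm_trace_le (X : M₂) : ‖X.trace‖ ≤ 2 * ‖X‖ := by
  rw [trace_fin_two, linfty_opNorm_fin_two]
  have := norm_add_le (X 0 0) (X 1 1)
  have := le_max_left (‖X 0 0‖ + ‖X 0 1‖) (‖X 1 0‖ + ‖X 1 1‖)
  have := le_max_right (‖X 0 0‖ + ‖X 0 1‖) (‖X 1 0‖ + ‖X 1 1‖)
  linarith [norm_nonneg (X 0 1), norm_nonneg (X 1 0)]

lemma HasDerivAt.matrix_apply {f : ℝ → M₂} {f' : M₂} {t : ℝ} (h : HasDerivAt f f' t)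
    (i j : Fin 2) :
    HasDerivAt (fun s => f s i j) (f' i j) t :=
  ((ContinuousLinearMap.proj (R := ℝ) (φ := fun _ : Fin 2 => ℂ) j).comp
    (ContinuousLinearMap.proj (R := ℝ) (φ := fun _ : Fin 2 => Fin 2 → ℂ) i)).hasFDerivAt
    |>.comp_hasDerivAt t h

def pauli3 : M₂ := !![1, 0; 0, -1]

/-- `pauli1Rotation x = exp (-i x σ₁)`. -/
def pauli1Rotation (x : ℝ) : M₂ :=
  !![(Real.cos x : ℂ), -I * Real.sin x; -I * Real.sin x, (Real.cos x : ℂ)]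

lemma pauli1Rotation_eq_smul (x : ℝ) :
    pauli1Rotation x = (Real.cos x : ℂ) • 1 - (I * Real.sin x) • pauli1 := by
  ext i j; fin_cases i <;> fin_cases j <;> simp [pauli1Rotation, pauli1]

lemma trace_pauli1Rotation (x : ℝ) : (pauli1Rotation x).trace = 2 * Real.cos x := by
  simp [pauli1Rotation, trace_fin_two]; ring

lemma norm_pauli1Rotation_le (x : ℝ) : ‖pauli1Rotation x‖ ≤ 2 := by
  simp [linfty_opNorm_fin_two, pauli1Rotation, -Complex.ofReal_cos, -Complex.ofReal_sin]
  constructor <;> linarith [Real.abs_cos_le_one x, Real.abs_sin_le_one x]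

lemma pauli1Rotation_mul_smul_pauli2_sub (x a : ℝ) :
    pauli1Rotation x *
        ((I * (a * Real.cos (2 * x) : ℝ)) • pauli2 - (I * (a * Real.sin (2 * x) : ℝ)) • pauli3)
      = (I * a) • (pauli2 * pauli1Rotation x) := by
  ext i j
  fin_cases i <;> fin_cases j <;>
    simp [pauli1Rotation, pauli2, pauli3, Matrix.mul_apply, Fin.sum_univ_two,
      Real.cos_two_mul, Real.sin_two_mul] <;> ring_nf <;>
    simp [Complex.I_sq, Complex.sin_sq] <;> ring

lemma norm_I_smul_pauli2_sub_I_smul_pauli3 (a b : ℝ) :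
    ‖(I * a) • pauli2 - (I * b) • pauli3‖ = |a| + |b| := by
  simp [linfty_opNorm_fin_two, pauli2, pauli3, add_comm]

lemma pauli1_mul_self : pauli1 * pauli1 = 1 := by
  ext i j; fin_cases i <;> fin_cases j <;> simp [pauli1]

lemma HasDerivAt.pauli1Rotation_comp {θ : ℝ → ℝ} {θ' t : ℝ} (hθ : HasDerivAt θ θ' t) :
    HasDerivAt (fun s => pauli1Rotation (θ s))
      ((-I * θ') • (pauli1 * pauli1Rotation (θ t))) t := by
  simp only [pauli1Rotation_eq_smul]
  have hcos := ((Real.hasDerivAt_cos (θ t)).comp t hθ).ofReal_comp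
  have hsin := ((Real.hasDerivAt_sin (θ t)).comp t hθ).ofReal_comp
  refine ((hcos.smul_const (1 : M₂)).fun_sub ((hsin.const_mul I).smul_const pauli1)).congr_deriv ?_
  rw [mul_sub, mul_smul_comm, mul_smul_comm, mul_one, pauli1_mul_self]
  push_cast
  match_scalars
  · ring_nf
    simp [I_sq]
  · ring

def phase (A : ℝ → ℝ × ℝ) (ξ T : ℝ) : ℝ := ξ * T + ∫ s in (0 : ℝ)..T, (A s).1

lemma hasDerivAt_phase {A : ℝ → ℝ × ℝ} (hA : Continuous A) (ξ T : ℝ) :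
    HasDerivAt (phase A ξ) (ξ + (A T).1) T := by
  have h₁ : Continuous fun t => (A t).1 := by fun_prop
  exact ((hasDerivAt_id T).const_mul ξ |>.congr_deriv (mul_one ξ)).add
    (integral_hasDerivAt_right (h₁.intervalIntegrable _ _) (h₁.stronglyMeasurableAtFilter _ _)
      h₁.continuousAt)

/-- With `R = pauli1Rotation`, `U = R(θ) V` solves `i U' = D U` iff `V' = B V` for
`B = R(θ)⁻¹ (i A₂ σ₂) R(θ)`, which is this matrix. -/
def interactionCoeff (A : ℝ → ℝ × ℝ) (ξ t : ℝ) : M₂ :=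
  (I * ((A t).2 * Real.cos (2 * phase A ξ t) : ℝ)) • pauli2
    - (I * ((A t).2 * Real.sin (2 * phase A ξ t) : ℝ)) • pauli3

theorem isFundamentalSolution_pauli1Rotation_mul {A : ℝ → ℝ × ℝ} (hA : Continuous A) {ξ : ℝ}
    {V : ℝ → M₂} (hV0 : V 0 = 1) (hV : ∀ t, HasDerivAt V (interactionCoeff A ξ t * V t) t) :
    IsFundamentalSolution (Dwkb A ξ) fun t => pauli1Rotation (phase A ξ t) * V t := by
  refine ⟨by simp [phase, hV0, pauli1Rotation_eq_smul], fun t i j => ?_⟩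
  refine HasDerivAt.matrix_apply ?_ i j
  refine (((hasDerivAt_phase hA ξ t).pauli1Rotation_comp).fun_mul (hV t)).congr_deriv ?_
  rw [← mul_assoc (pauli1Rotation _), interactionCoeff, pauli1Rotation_mul_smul_pauli2_sub, Dwkb]
  simp only [Matrix.add_mul, Matrix.sub_mul, smul_mul_assoc, mul_assoc]
  push_cast
  match_scalars <;> ring

lemma trace_Dwkb (A : ℝ → ℝ × ℝ) (ξ T : ℝ) : (Dwkb A ξ T).trace = 0 := by
  simp [Dwkb, pauli1, pauli2, trace_fin_two]

/-- Liouville's formula `(det U)' = tr (-i D) det U` makes the determinant constant. -/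
theorem det_eq_one_of_isFundamentalSolution {D U : ℝ → M₂} (hD : ∀ t, (D t).trace = 0)
    (hU : IsFundamentalSolution D U) (t : ℝ) : (U t).det = 1 := by
  have hdet : ∀ s, HasDerivAt (fun s => (U s).det) 0 s := fun s => by
    have h := ((hU.2 s 0 0).fun_mul (hU.2 s 1 1)).fun_sub ((hU.2 s 0 1).fun_mul (hU.2 s 1 0))
    simp only [← det_fin_two] at h
    refine h.congr_deriv ?_
    have := hD s
    simp only [trace_fin_two, Matrix.smul_apply, mul_apply, Fin.sum_univ_two, smul_eq_mul] at this ⊢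
    linear_combination (-I * (U s 0 0 * U s 1 1 - U s 0 1 * U s 1 0)) * this
  rw [is_const_of_deriv_eq_zero (fun s => (hdet s).differentiableAt) (fun s => (hdet s).deriv) t 0,
    hU.1, det_one]

lemma mem_spectrum_of_sq_sub_trace_mul_add_one {M : M₂} (hdet : M.det = 1) {w : ℂ}
    (hw : w ^ 2 - M.trace * w + 1 = 0) : w ∈ spectrum ℂ M := by
  rw [spectrum.mem_iff, isUnit_iff_isUnit_det, Algebra.algebraMap_eq_smul_one, det_fin_two]
  rw [det_fin_two] at hdet
  rw [trace_fin_two] at hw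
  simp only [Matrix.sub_apply, Matrix.smul_apply, one_apply_eq, one_apply_ne zero_ne_one,
    one_apply_ne one_ne_zero, smul_eq_mul, mul_one, mul_zero, zero_sub]
  rw [show (w - M 0 0) * (w - M 1 1) - -M 0 1 * -M 1 0 = 0 by linear_combination hw + hdet]
  exact not_isUnit_zero

theorem exists_mem_spectrum_norm_sub_le {M : M₂} (hdet : M.det = 1) {z : ℂ} (hz : ‖z‖ = 1)
    {ε : ℝ} (h : ‖M.trace - 2 * z.re‖ ≤ ε) : ∃ w ∈ spectrum ℂ M, ‖w - z‖ ≤ √ε := by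
  set t := M.trace
  obtain ⟨s, hs⟩ : ∃ s : ℂ, s ^ 2 = t ^ 2 - 4 := IsAlgClosed.exists_pow_nat_eq _ two_pos
  have hzz : z * starRingEnd ℂ z = 1 := by
    rw [mul_conj, normSq_eq_norm_sq, hz]; norm_num
  have hprod : (z - (t + s) / 2) * (z - (t - s) / 2) = z * (2 * z.re - t) := by
    rw [re_eq_add_conj]
    linear_combination -hs / 4 - hzz
  have hle : ‖(t + s) / 2 - z‖ * ‖(t - s) / 2 - z‖ ≤ ε := by
    rwa [norm_sub_rev, norm_sub_rev _ z, ← norm_mul, hprod, norm_mul, hz, one_mul, norm_sub_rev]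
  have hroot : ∀ w, w ^ 2 - t * w + 1 = 0 → ‖w - z‖ ^ 2 ≤ ε →
      ∃ w ∈ spectrum ℂ M, ‖w - z‖ ≤ √ε := fun w hw hwz =>
    ⟨w, mem_spectrum_of_sq_sub_trace_mul_add_one hdet hw, Real.le_sqrt_of_sq_le hwz⟩
  rcases le_total ‖(t + s) / 2 - z‖ ‖(t - s) / 2 - z‖ with h' | h'
  · exact hroot ((t + s) / 2) (by linear_combination hs / 4)
      (by nlinarith [norm_nonneg ((t + s) / 2 - z)])
  · exact hroot ((t - s) / 2) (by linear_combination hs / 4)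
      (by nlinarith [norm_nonneg ((t - s) / 2 - z)])

lemma norm_trace_pauli1Rotation_mul_sub_le (x : ℝ) (X : M₂) :
    ‖(pauli1Rotation x * X).trace - 2 * Real.cos x‖ ≤ 4 * ‖X - 1‖ := by
  calc ‖(pauli1Rotation x * X).trace - 2 * Real.cos x‖
      = ‖(pauli1Rotation x * (X - 1)).trace‖ := by
        rw [mul_sub, mul_one, trace_sub, trace_pauli1Rotation]
    _ ≤ 2 * (‖pauli1Rotation x‖ * ‖X - 1‖) :=
        (norm_trace_le _).trans (by gcongr; exact norm_mul_le _ _)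
    _ ≤ 4 * ‖X - 1‖ := by nlinarith [norm_pauli1Rotation_le x, norm_nonneg (X - 1)]

lemma continuous_phase {A : ℝ → ℝ × ℝ} (hA : Continuous A) (ξ : ℝ) : Continuous (phase A ξ) :=
  continuous_iff_continuousAt.2 fun T => (hasDerivAt_phase hA ξ T).continuousAt

lemma integral_interactionCoeff {A : ℝ → ℝ × ℝ} (hA : Continuous A) (ξ t : ℝ) :
    ∫ s in (0 : ℝ)..t, interactionCoeff A ξ s =
      (I * (∫ s in (0 : ℝ)..t, (A s).2 * Real.cos (2 * phase A ξ s) : ℝ)) • pauli2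
        - (I * (∫ s in (0 : ℝ)..t, (A s).2 * Real.sin (2 * phase A ξ s) : ℝ)) • pauli3 := by
  have := continuous_phase hA ξ
  unfold interactionCoeff
  rw [integral_sub ((Continuous.intervalIntegrable (by fun_prop) _ _))
    ((Continuous.intervalIntegrable (by fun_prop) _ _))]
  simp only [intervalIntegral.integral_smul_const, intervalIntegral.integral_const_mul,
    intervalIntegral.integral_ofReal]

lemma norm_interactionCoeff_le (A : ℝ → ℝ × ℝ) (ξ t : ℝ) :
    ‖interactionCoeff A ξ t‖ ≤ 2 * |(A t).2| := by
  rw [interactionCoeff, norm_I_smul_pauli2_sub_I_smul_pauli3, abs_mul, abs_mul]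
  nlinarith [Real.abs_cos_le_one (2 * phase A ξ t), Real.abs_sin_le_one (2 * phase A ξ t),
    abs_nonneg (A t).2]

lemma norm_integral_interactionCoeff_le {A : ℝ → ℝ × ℝ} (hA : ContDiff ℝ 1 A) {ξ K T : ℝ}
    (hT : 0 ≤ T) (hK : ∀ s ∈ Icc 0 T, ‖A s‖ ≤ K ∧ ‖deriv A s‖ ≤ K) (hξ : 2 * K + 1 ≤ ξ) :
    ‖∫ s in (0 : ℝ)..T, interactionCoeff A ξ s‖ ≤ 4 * K * (1 + T) / ξ := by
  have hθ := continuous_phase hA.continuous ξ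
  have hcos := abs_integral_snd_mul_le hA hT hK hξ (G := fun s => Real.sin (2 * phase A ξ s))
    (fun s => ((hasDerivAt_phase hA.continuous ξ s).const_mul 2).sin.congr_deriv (by ring))
    (by fun_prop) (fun s => Real.abs_sin_le_one _)
  have hsin := abs_integral_snd_mul_le hA hT hK hξ (G := fun s => -Real.cos (2 * phase A ξ s))
    (fun s => ((hasDerivAt_phase hA.continuous ξ s).const_mul 2).cos.neg.congr_deriv (by ring))
    (by fun_prop) (fun s => (abs_neg _).trans_le (Real.abs_cos_le_one _))
  rw [integral_interactionCoeff hA.continuous, norm_I_smul_pauli2_sub_I_smul_pauli3]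
  linarith [show 4 * K * (1 + T) / ξ = 2 * (2 * K * (1 + T) / ξ) by ring]

theorem exists_solution_norm_sub_one_le {A : ℝ → ℝ × ℝ} (hA : ContDiff ℝ 1 A) {ξ K T : ℝ}
    (hT : 0 ≤ T) (hK : ∀ s ∈ Icc 0 T, ‖A s‖ ≤ K ∧ ‖deriv A s‖ ≤ K) (hξ : 2 * K + 1 ≤ ξ) :
    ∃ V : ℝ → M₂, V 0 = 1 ∧ (∀ t, HasDerivAt V (interactionCoeff A ξ t * V t) t) ∧
      ‖V T - 1‖ ≤ 4 * K * (1 + T) * Real.exp (2 * K * T) / ξ := by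
  have hB : Continuous (interactionCoeff A ξ) := by
    have := hA.continuous
    have := continuous_phase hA.continuous ξ
    unfold interactionCoeff
    fun_prop
  obtain ⟨V, hV0, hV⟩ := exists_hasDerivAt_eq_mul hB
  refine ⟨V, hV0, hV, ?_⟩
  have hK0 : 0 ≤ K := (norm_nonneg _).trans (hK 0 ⟨le_rfl, hT⟩).1
  have hξ0 : 0 < ξ := by linarith
  have hc : ∀ t ∈ Icc 0 T, ‖interactionCoeff A ξ t‖ ≤ 2 * K := fun t ht => by
    have : |(A t).2| ≤ K := (norm_snd_le (A t)).trans (hK t ht).1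
    linarith [norm_interactionCoeff_le A ξ t]
  have hε : ∀ t ∈ Icc 0 T, ‖∫ s in (0 : ℝ)..t, interactionCoeff A ξ s‖ ≤ 4 * K * (1 + T) / ξ :=
    fun t ht => (norm_integral_interactionCoeff_le hA ht.1
      (fun s hs => hK s (Icc_subset_Icc_right ht.2 hs)) hξ).trans (by gcongr; exact ht.2)
  calc ‖V T - 1‖ ≤ 4 * K * (1 + T) / ξ * Real.exp (2 * K * T) :=
        norm_sub_one_le_of_hasDerivAt hB hV0 hV hT hc hε
    _ = 4 * K * (1 + T) * Real.exp (2 * K * T) / ξ := by ring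

lemma exists_le_cos_mul_eq {T : ℝ} (hT : 0 < T) {x : ℝ} (hx : |x| ≤ 1) (M : ℝ) :
    ∃ ξ, M ≤ ξ ∧ Real.cos (ξ * T) = x := by
  obtain ⟨n, hn⟩ := exists_nat_ge (M * T / (2 * Real.pi))
  refine ⟨(Real.arccos x + n * (2 * Real.pi)) / T, ?_, ?_⟩
  · rw [le_div_iff₀ hT]
    rw [div_le_iff₀ (by positivity)] at hn
    linarith [Real.arccos_nonneg x]
  · rw [div_mul_cancel₀ _ hT.ne', Real.cos_add_nat_mul_two_pi,
      Real.cos_arccos (neg_le_of_abs_le hx) (le_of_abs_le hx)]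

theorem floquet_multipliers_dense_in_circle_general
    (Tper : ℝ) (hTper : 0 < Tper)
    (A : ℝ → ℝ × ℝ) (hA : ContDiff ℝ 1 A)
    (hmean₁ : ∫ T in (0 : ℝ)..Tper, (A T).1 = 0) :
    ∀ z : ℂ, ‖z‖ = 1 → ∀ δ : ℝ, 0 < δ →
      ∃ ξ : ℝ, ∃ U : ℝ → Matrix (Fin 2) (Fin 2) ℂ,
        IsFundamentalSolution (Dwkb A ξ) U ∧
        ∃ w ∈ spectrum ℂ (U Tper), ‖w - z‖ < δ := by
  intro z hz δ hδ
  obtain ⟨K, hK⟩ := isCompact_Icc.exists_bound_of_continuousOn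
    (hA.continuous.prodMk (hA.continuous_deriv le_rfl)).continuousOn (s := Icc 0 Tper)
  set C := 4 * K * (1 + Tper) * Real.exp (2 * K * Tper)
  obtain ⟨ξ, hξ, hcos⟩ := exists_le_cos_mul_eq hTper ((abs_re_le_norm z).trans hz.le)
    (max (2 * K + 1) (16 * C / δ ^ 2))
  obtain ⟨V, hV0, hV, hVT⟩ := exists_solution_norm_sub_one_le hA hTper.le
    (fun s hs => ⟨(norm_fst_le _).trans (hK s hs), (norm_snd_le _).trans (hK s hs)⟩)
    (le_of_max_le_left hξ)
  have hU := isFundamentalSolution_pauli1Rotation_mul hA.continuous hV0 hV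
  have hθ : phase A ξ Tper = ξ * Tper := by simp [phase, hmean₁]
  have hξ0 : 0 < ξ := by
    linarith [le_of_max_le_left hξ, (norm_nonneg _).trans (hK 0 ⟨le_rfl, hTper.le⟩)]
  obtain ⟨w, hw, hwz⟩ := exists_mem_spectrum_norm_sub_le
    (det_eq_one_of_isFundamentalSolution (trace_Dwkb A ξ) hU Tper) hz (ε := 4 * (C / ξ)) <| by
      rw [← hcos, ← hθ]
      exact (norm_trace_pauli1Rotation_mul_sub_le _ _).trans (by gcongr)
  refine ⟨ξ, _, hU, w, hw, hwz.trans_lt ((Real.sqrt_lt' hδ).2 ?_)⟩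
  have := (div_le_iff₀ (by positivity)).1 (le_of_max_le_right hξ)
  rw [mul_div_assoc', div_lt_iff₀ hξ0]
  nlinarith [mul_pos (pow_pos hδ 2) hξ0]

/-- **Density of Floquet multipliers in the unit circle** (justification of Remark 3.5):
for a `C¹`, `T_per`-periodic, mean-zero forcing `A`, for every `z` on the unit circle and
every `δ > 0` there are a momentum `ξ ∈ ℝ`, a fundamental solution `U_ξ` of
`i U′ = [ξσ₁ + A₁(T)σ₁ − A₂(T)σ₂] U`, and an eigenvalue `w` of the monodromy matrix
`U_ξ(T_per)` with `|w − z| < δ`. -/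
theorem floquet_multipliers_dense_in_circle
    (Tper : ℝ) (hTper : 0 < Tper)
    (A : ℝ → ℝ × ℝ) (hA : ContDiff ℝ 1 A)
    (hperiodic : ∀ T : ℝ, A (T + Tper) = A T)
    (hmean₁ : ∫ T in (0 : ℝ)..Tper, (A T).1 = 0)
    (hmean₂ : ∫ T in (0 : ℝ)..Tper, (A T).2 = 0) :
    ∀ z : ℂ, ‖z‖ = 1 → ∀ δ : ℝ, 0 < δ →
      ∃ ξ : ℝ, ∃ U : ℝ → Matrix (Fin 2) (Fin 2) ℂ,
        IsFundamentalSolution (Dwkb A ξ) U ∧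
        ∃ w ∈ spectrum ℂ (U Tper), ‖w - z‖ < δ :=
  floquet_multipliers_dense_in_circle_general Tper hTper A hA hmean₁
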